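/- The quotient G/Cyc(G) has trivial cycliciser, i.e., Cyc(G/Cyc(G)) = 1. -/

import Mathlib

/-!
If `cN` and `gN` both lie in a cyclic subgroup `⟨xN⟩` of `G/N`, then `c = xⁱn₁` and `g = xʲn₂`
with `n₁, n₂ ∈ N`. Since `n₁` lies in the cycliciser, `⟨x, n₁⟩` sits in some cyclic `⟨z₁⟩`,
and likewise `⟨z₁, n₂⟩` sits in some cyclic `⟨z⟩`; this `⟨z⟩` contains `c` and `g`.
-/

open Subgroup

theorem isCyclic_closure_pair_iff {G : Type*} [Group G] {a b : G} :
    IsCyclic (closure {a, b}) ↔ ∃ y : G, a ∈ zpowers y ∧ b ∈ zpowers y := by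
  constructor
  · intro h
    obtain ⟨y, hy⟩ := (Subgroup.isCyclic_iff_exists_zpowers_eq_top _).mp h
    exact ⟨y, hy ▸ subset_closure (by simp), hy ▸ subset_closure (by simp)⟩
  · rintro ⟨y, ha, hb⟩
    have hle : closure {a, b} ≤ zpowers y := by
      rw [closure_le, Set.insert_subset_iff, Set.singleton_subset_iff]
      exact ⟨ha, hb⟩
    exact isCyclic_of_le hle

theorem exists_zpowers_le_of_forall_isCyclic_closure {G : Type*} [Group G] {n : G}
    (hn : ∀ g : G, IsCyclic (closure {n, g})) (y : G) :
    ∃ z : G, n ∈ zpowers z ∧ zpowers y ≤ zpowers z := by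
  obtain ⟨z, hnz, hyz⟩ := isCyclic_closure_pair_iff.mp (hn y)
  exact ⟨z, hnz, zpowers_le.mpr hyz⟩

theorem QuotientGroup.exists_zpow_mul_of_mk_mem_zpowers {G : Type*} [Group G]
    {N : Subgroup G} [N.Normal] {c x : G} (h : (c : G ⧸ N) ∈ zpowers (x : G ⧸ N)) :
    ∃ i : ℤ, ∃ n ∈ N, x ^ i * n = c := by
  obtain ⟨i, hi⟩ := h
  exact ⟨i, (x ^ i)⁻¹ * c, QuotientGroup.eq.mp (by simpa using hi), mul_inv_cancel_left _ _⟩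

theorem cycliciser_of_quotient_by_cycliciser_trivial_general (G : Type*) [Group G]
    (N : Subgroup G) [N.Normal]
    (hN : ∀ c : G, c ∈ N ↔ ∀ g : G, IsCyclic ↥(Subgroup.closure {c, g})) :
    ∀ c : G ⧸ N, (∀ g : G ⧸ N, IsCyclic ↥(Subgroup.closure {c, g})) → c = 1 := by
  intro c hc
  induction c using QuotientGroup.induction_on with | H c =>
  rw [QuotientGroup.eq_one_iff, hN]
  intro g
  obtain ⟨y, hcy, hgy⟩ := isCyclic_closure_pair_iff.mp (hc g)
  obtain ⟨x, rfl⟩ := QuotientGroup.mk_surjective y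
  obtain ⟨i, n₁, hn₁, rfl⟩ := QuotientGroup.exists_zpow_mul_of_mk_mem_zpowers hcy
  obtain ⟨j, n₂, hn₂, rfl⟩ := QuotientGroup.exists_zpow_mul_of_mk_mem_zpowers hgy
  obtain ⟨z₁, hn₁z₁, hxz₁⟩ := exists_zpowers_le_of_forall_isCyclic_closure ((hN n₁).mp hn₁) x
  obtain ⟨z, hn₂z, hz₁z⟩ := exists_zpowers_le_of_forall_isCyclic_closure ((hN n₂).mp hn₂) z₁
  have hxz : zpowers x ≤ zpowers z := hxz₁.trans hz₁z
  exact isCyclic_closure_pair_iff.mpr ⟨z, mul_mem (hxz (zpow_mem_zpowers x i)) (hz₁z hn₁z₁),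
    mul_mem (hxz (zpow_mem_zpowers x j)) hn₂z⟩

theorem cycliciser_of_quotient_by_cycliciser_trivial (G : Type*) [Group G] [Finite G]
    (N : Subgroup G) [N.Normal]
    (hN : ∀ c : G, c ∈ N ↔ ∀ g : G, IsCyclic ↥(Subgroup.closure {c, g})) :
    ∀ c : G ⧸ N, (∀ g : G ⧸ N, IsCyclic ↥(Subgroup.closure {c, g})) → c = 1 :=
  cycliciser_of_quotient_by_cycliciser_trivial_general G N hN
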